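/- arXiv:2004.03743 — 2 statements merged into one kernel-verified Lean document; each statement's English description precedes it below -/
import Mathlib

section
/- Let a, b : ℝ be constants and u : ℝ × ℝ × ℝ → ℝ smooth (variables (t,x,y)). Set E[u] = ∂ₜ²u − ∂ₓ²u − ∂ᵧ²u − a·∂ₓ²(u²) − b·∂ₓ⁴u, and let v = y·∂ₜu + t·∂ᵧu. Then the linearized equation holds modulo E[u]: ∂ₜ²v − ∂ₓ²v − ∂ᵧ²v − 2a·∂ₓ²(u·v) − b·∂ₓ⁴v = y·∂ₜ(E[u]) + t·∂ᵧ(E[u]) pointwise. In particular, if u solves the 2D Boussinesq equation E[u] = 0, then v satisfies the linearized equation, i.e., the boost X = y∂ₜ + t∂ᵧ is a symmetry. -/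
noncomputable section

/-- partial derivatives on functions of `(t,x,y) : ℝ × ℝ × ℝ` -/
def dt3 (u : ℝ × ℝ × ℝ → ℝ) : ℝ × ℝ × ℝ → ℝ :=
  fun p => deriv (fun s => u (s, p.2.1, p.2.2)) p.1
def dx3 (u : ℝ × ℝ × ℝ → ℝ) : ℝ × ℝ × ℝ → ℝ :=
  fun p => deriv (fun s => u (p.1, s, p.2.2)) p.2.1
def dy3 (u : ℝ × ℝ × ℝ → ℝ) : ℝ × ℝ × ℝ → ℝ :=
  fun p => deriv (fun s => u (p.1, p.2.1, s)) p.2.2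

/-- the 2D Boussinesq expression `E[u] = u_{tt} − u_{xx} − u_{yy} − a(u²)_{xx} − b u_{xxxx}` -/
def bousE (a b : ℝ) (u : ℝ × ℝ × ℝ → ℝ) : ℝ × ℝ × ℝ → ℝ :=
  fun p => dt3 (dt3 u) p - dx3 (dx3 u) p - dy3 (dy3 u) p
    - a * dx3 (dx3 (fun q => u q ^ 2)) p - b * dx3 (dx3 (dx3 (dx3 u))) p

def D (w : ℝ × ℝ × ℝ) (f : ℝ × ℝ × ℝ → ℝ) : ℝ × ℝ × ℝ → ℝ :=
  fun p => fderiv ℝ f p w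

@[fun_prop]
lemma D_contDiff (w : ℝ × ℝ × ℝ) {f : ℝ × ℝ × ℝ → ℝ} (hf : ContDiff ℝ (⊤ : ℕ∞) f) :
    ContDiff ℝ (⊤ : ℕ∞) (D w f) :=
  (hf.fderiv_right (by simp)).clm_apply contDiff_const

lemma dt3_eq {f : ℝ × ℝ × ℝ → ℝ} (hf : ContDiff ℝ (⊤ : ℕ∞) f) :
    dt3 f = D (1, 0, 0) f := by
  funext p
  have h1 : HasDerivAt (fun s : ℝ => ((s, p.2.1, p.2.2) : ℝ × ℝ × ℝ))
      ((1 : ℝ), (0 : ℝ), (0 : ℝ)) p.1 :=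
    (hasDerivAt_id p.1).prodMk (hasDerivAt_const _ _)
  exact (((hf.differentiable (by simp)) p).hasFDerivAt.comp_hasDerivAt p.1 h1).deriv

lemma dx3_eq {f : ℝ × ℝ × ℝ → ℝ} (hf : ContDiff ℝ (⊤ : ℕ∞) f) :
    dx3 f = D (0, 1, 0) f := by
  funext p
  have h1 : HasDerivAt (fun s : ℝ => ((p.1, s, p.2.2) : ℝ × ℝ × ℝ))
      ((0 : ℝ), (1 : ℝ), (0 : ℝ)) p.2.1 :=
    (hasDerivAt_const _ _).prodMk ((hasDerivAt_id p.2.1).prodMk (hasDerivAt_const _ _))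
  exact (((hf.differentiable (by simp)) p).hasFDerivAt.comp_hasDerivAt p.2.1 h1).deriv

lemma dy3_eq {f : ℝ × ℝ × ℝ → ℝ} (hf : ContDiff ℝ (⊤ : ℕ∞) f) :
    dy3 f = D (0, 0, 1) f := by
  funext p
  have h1 : HasDerivAt (fun s : ℝ => ((p.1, p.2.1, s) : ℝ × ℝ × ℝ))
      ((0 : ℝ), (0 : ℝ), (1 : ℝ)) p.2.2 :=
    (hasDerivAt_const _ _).prodMk ((hasDerivAt_const _ _).prodMk (hasDerivAt_id p.2.2))
  exact (((hf.differentiable (by simp)) p).hasFDerivAt.comp_hasDerivAt p.2.2 h1).deriv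

lemma D_add {f g : ℝ × ℝ × ℝ → ℝ} (hf : ContDiff ℝ (⊤ : ℕ∞) f) (hg : ContDiff ℝ (⊤ : ℕ∞) g)
    (w : ℝ × ℝ × ℝ) :
    D w (fun q => f q + g q) = fun q => D w f q + D w g q := by
  funext p
  simp [D, fderiv_fun_add ((hf.differentiable (by simp)) p) ((hg.differentiable (by simp)) p)]

lemma D_sub {f g : ℝ × ℝ × ℝ → ℝ} (hf : ContDiff ℝ (⊤ : ℕ∞) f) (hg : ContDiff ℝ (⊤ : ℕ∞) g)
    (w : ℝ × ℝ × ℝ) :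
    D w (fun q => f q - g q) = fun q => D w f q - D w g q := by
  funext p
  simp [D, fderiv_fun_sub ((hf.differentiable (by simp)) p) ((hg.differentiable (by simp)) p)]

lemma D_mul {f g : ℝ × ℝ × ℝ → ℝ} (hf : ContDiff ℝ (⊤ : ℕ∞) f) (hg : ContDiff ℝ (⊤ : ℕ∞) g)
    (w : ℝ × ℝ × ℝ) :
    D w (fun q => f q * g q) = fun q => D w f q * g q + f q * D w g q := by
  funext p
  simp [D, fderiv_fun_mul ((hf.differentiable (by simp)) p) ((hg.differentiable (by simp)) p)]
  ring

lemma D_const (c : ℝ) (w : ℝ × ℝ × ℝ) : D w (fun _ => c) = fun _ => 0 := by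
  funext p; simp [D]

lemma D_fst (w : ℝ × ℝ × ℝ) : D w (fun q : ℝ × ℝ × ℝ => q.1) = fun _ => w.1 := by
  funext p
  have : HasFDerivAt (fun q : ℝ × ℝ × ℝ => q.1)
      (ContinuousLinearMap.fst ℝ ℝ (ℝ × ℝ)) p := hasFDerivAt_fst
  simp [D, this.fderiv]

lemma D_snd_snd (w : ℝ × ℝ × ℝ) : D w (fun q : ℝ × ℝ × ℝ => q.2.2) = fun _ => w.2.2 := by
  funext p
  have : HasFDerivAt (fun q : ℝ × ℝ × ℝ => q.2.2)
      ((ContinuousLinearMap.snd ℝ ℝ ℝ).comp (ContinuousLinearMap.snd ℝ ℝ (ℝ × ℝ))) p :=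
    (hasFDerivAt_snd).comp p hasFDerivAt_snd
  simp [D, this.fderiv]

lemma D_D {u : ℝ × ℝ × ℝ → ℝ} (hu : ContDiff ℝ (⊤ : ℕ∞) u) (v w : ℝ × ℝ × ℝ) (p : ℝ × ℝ × ℝ) :
    D v (D w u) p = fderiv ℝ (fderiv ℝ u) p v w := by
  have hdiff : DifferentiableAt ℝ (fderiv ℝ u) p :=
    ((hu.fderiv_right (m := (⊤ : ℕ∞)) (by simp)).differentiable (by simp)) p
  have h := fderiv_clm_apply (𝕜 := ℝ) hdiff (differentiableAt_const w)
  show fderiv ℝ (fun q => fderiv ℝ u q w) p v = fderiv ℝ (fderiv ℝ u) p v w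
  rw [h]
  simp

lemma D_comm {u : ℝ × ℝ × ℝ → ℝ} (hu : ContDiff ℝ (⊤ : ℕ∞) u) (v w : ℝ × ℝ × ℝ) :
    D v (D w u) = D w (D v u) := by
  funext p
  rw [D_D hu, D_D hu]
  exact (hu.contDiffAt.isSymmSndFDerivAt (by rw [minSmoothness_of_isRCLikeNormedField]; exact WithTop.coe_le_coe.mpr (le_top : (2 : ℕ∞) ≤ ⊤))) v w

lemma D_comm_xt {f : ℝ × ℝ × ℝ → ℝ} (hf : ContDiff ℝ (⊤ : ℕ∞) f) :
    D ((0:ℝ), (1:ℝ), (0:ℝ)) (D ((1:ℝ), (0:ℝ), (0:ℝ)) f)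
      = D ((1:ℝ), (0:ℝ), (0:ℝ)) (D ((0:ℝ), (1:ℝ), (0:ℝ)) f) := D_comm hf _ _

lemma D_comm_yt {f : ℝ × ℝ × ℝ → ℝ} (hf : ContDiff ℝ (⊤ : ℕ∞) f) :
    D ((0:ℝ), (0:ℝ), (1:ℝ)) (D ((1:ℝ), (0:ℝ), (0:ℝ)) f)
      = D ((1:ℝ), (0:ℝ), (0:ℝ)) (D ((0:ℝ), (0:ℝ), (1:ℝ)) f) := D_comm hf _ _

lemma D_comm_yx {f : ℝ × ℝ × ℝ → ℝ} (hf : ContDiff ℝ (⊤ : ℕ∞) f) :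
    D ((0:ℝ), (0:ℝ), (1:ℝ)) (D ((0:ℝ), (1:ℝ), (0:ℝ)) f)
      = D ((0:ℝ), (1:ℝ), (0:ℝ)) (D ((0:ℝ), (0:ℝ), (1:ℝ)) f) := D_comm hf _ _

/-- The boost `X = y∂ₜ + t∂ᵧ` is a symmetry of the 2D Boussinesq equation:
with `v = y u_t + t u_y`, the linearized equation holds modulo `E[u]`,
`v_{tt} − v_{xx} − v_{yy} − 2a(uv)_{xx} − b v_{xxxx} = y ∂ₜE[u] + t ∂ᵧE[u]`,
and on solutions `v` solves the linearized equation. -/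
theorem boussinesq2d_boost_symmetry
    (a b : ℝ) (u : ℝ × ℝ × ℝ → ℝ) (hu : ContDiff ℝ (⊤ : ℕ∞) u) :
    (∀ p : ℝ × ℝ × ℝ,
      dt3 (dt3 (fun q => q.2.2 * dt3 u q + q.1 * dy3 u q)) p
        - dx3 (dx3 (fun q => q.2.2 * dt3 u q + q.1 * dy3 u q)) p
        - dy3 (dy3 (fun q => q.2.2 * dt3 u q + q.1 * dy3 u q)) p
        - 2 * a * dx3 (dx3 (fun q => u q * (q.2.2 * dt3 u q + q.1 * dy3 u q))) p
        - b * dx3 (dx3 (dx3 (dx3 (fun q => q.2.2 * dt3 u q + q.1 * dy3 u q)))) p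
      = p.2.2 * dt3 (bousE a b u) p + p.1 * dy3 (bousE a b u) p)
    ∧ ((∀ p : ℝ × ℝ × ℝ, bousE a b u p = 0) →
        ∀ p : ℝ × ℝ × ℝ,
          dt3 (dt3 (fun q => q.2.2 * dt3 u q + q.1 * dy3 u q)) p
            - dx3 (dx3 (fun q => q.2.2 * dt3 u q + q.1 * dy3 u q)) p
            - dy3 (dy3 (fun q => q.2.2 * dt3 u q + q.1 * dy3 u q)) p
            - 2 * a * dx3 (dx3 (fun q => u q * (q.2.2 * dt3 u q + q.1 * dy3 u q))) p
            - b * dx3 (dx3 (dx3 (dx3 (fun q => q.2.2 * dt3 u q + q.1 * dy3 u q)))) p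
          = 0) := by
  have h2 : (fun q => u q ^ 2) = fun q => u q * u q := by funext q; ring
  have key : ∀ p : ℝ × ℝ × ℝ,
      dt3 (dt3 (fun q => q.2.2 * dt3 u q + q.1 * dy3 u q)) p
        - dx3 (dx3 (fun q => q.2.2 * dt3 u q + q.1 * dy3 u q)) p
        - dy3 (dy3 (fun q => q.2.2 * dt3 u q + q.1 * dy3 u q)) p
        - 2 * a * dx3 (dx3 (fun q => u q * (q.2.2 * dt3 u q + q.1 * dy3 u q))) p
        - b * dx3 (dx3 (dx3 (dx3 (fun q => q.2.2 * dt3 u q + q.1 * dy3 u q)))) p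
      = p.2.2 * dt3 (bousE a b u) p + p.1 * dy3 (bousE a b u) p := by
    intro p
    unfold bousE
    simp (disch := fun_prop) only [h2, dt3_eq, dx3_eq, dy3_eq, D_add, D_sub, D_mul, D_const,
      D_fst, D_snd_snd, D_comm_xt, D_comm_yt, D_comm_yx]
    ring
  refine ⟨key, fun hE p => ?_⟩
  rw [key p]
  have hz : bousE a b u = fun _ => (0 : ℝ) := funext hE
  rw [hz]
  simp [dt3, dy3]
end
end

section
/- Let u : ℝ × ℝ → ℝ be a smooth solution of the KdV equation ∂ₜu + u∂ₓu + ∂ₓ³u = 0, and define P = ∂ₓ⁵u + (5/3)u·∂ₓ³u + (10/3)(∂ₓu)(∂ₓ²u) + (5/6)u²·∂ₓu. Then P satisfies the linearized KdV equation: ∂ₜP + ∂ₓ(u·P) + ∂ₓ³P = 0. -/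
noncomputable section

def dt (u : ℝ × ℝ → ℝ) : ℝ × ℝ → ℝ := fun p => deriv (fun s => u (s, p.2)) p.1
def dx (u : ℝ × ℝ → ℝ) : ℝ × ℝ → ℝ := fun p => deriv (fun s => u (p.1, s)) p.2

namespace KdVAux

variable {f g : ℝ × ℝ → ℝ}

lemma hx' (hf : ContDiff ℝ (⊤ : ℕ∞) f) (p : ℝ × ℝ) :
    HasDerivAt (fun s => f (p.1, s)) (fderiv ℝ f p ((0 : ℝ), (1 : ℝ))) p.2 := by
  have h1 : HasDerivAt (fun s : ℝ => ((p.1, s) : ℝ × ℝ)) ((0 : ℝ), (1 : ℝ)) p.2 :=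
    (hasDerivAt_const _ _).prodMk (hasDerivAt_id _)
  exact ((hf.differentiable (by simp) (p.1, p.2)).hasFDerivAt).comp_hasDerivAt p.2 h1

lemma ht' (hf : ContDiff ℝ (⊤ : ℕ∞) f) (p : ℝ × ℝ) :
    HasDerivAt (fun s => f (s, p.2)) (fderiv ℝ f p ((1 : ℝ), (0 : ℝ))) p.1 := by
  have h1 : HasDerivAt (fun s : ℝ => ((s, p.2) : ℝ × ℝ)) ((1 : ℝ), (0 : ℝ)) p.1 :=
    (hasDerivAt_id _).prodMk (hasDerivAt_const _ _)
  exact ((hf.differentiable (by simp) (p.1, p.2)).hasFDerivAt).comp_hasDerivAt p.1 h1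

lemma dx_eq (hf : ContDiff ℝ (⊤ : ℕ∞) f) : dx f = fun p => fderiv ℝ f p ((0 : ℝ), (1 : ℝ)) :=
  funext fun p => (hx' hf p).deriv

lemma dt_eq (hf : ContDiff ℝ (⊤ : ℕ∞) f) : dt f = fun p => fderiv ℝ f p ((1 : ℝ), (0 : ℝ)) :=
  funext fun p => (ht' hf p).deriv

lemma hderiv_x (hf : ContDiff ℝ (⊤ : ℕ∞) f) (p : ℝ × ℝ) :
    HasDerivAt (fun s => f (p.1, s)) (dx f p) p.2 := by
  rw [dx_eq hf]; exact hx' hf p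

lemma hderiv_t (hf : ContDiff ℝ (⊤ : ℕ∞) f) (p : ℝ × ℝ) :
    HasDerivAt (fun s => f (s, p.2)) (dt f p) p.1 := by
  rw [dt_eq hf]; exact ht' hf p

@[fun_prop] lemma contDiff_dx (hf : ContDiff ℝ (⊤ : ℕ∞) f) : ContDiff ℝ (⊤ : ℕ∞) (dx f) := by
  rw [dx_eq hf]
  exact (hf.fderiv_right (by simp)).clm_apply contDiff_const

@[fun_prop] lemma contDiff_dt (hf : ContDiff ℝ (⊤ : ℕ∞) f) : ContDiff ℝ (⊤ : ℕ∞) (dt f) := by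
  rw [dt_eq hf]
  exact (hf.fderiv_right (by simp)).clm_apply contDiff_const

lemma dx_add (hf : ContDiff ℝ (⊤ : ℕ∞) f) (hg : ContDiff ℝ (⊤ : ℕ∞) g) :
    dx (fun q => f q + g q) = fun q => dx f q + dx g q :=
  funext fun p => ((hderiv_x hf p).add (hderiv_x hg p)).deriv

lemma dx_mul (hf : ContDiff ℝ (⊤ : ℕ∞) f) (hg : ContDiff ℝ (⊤ : ℕ∞) g) :
    dx (fun q => f q * g q) = fun q => dx f q * g q + f q * dx g q :=
  funext fun p => ((hderiv_x hf p).mul (hderiv_x hg p)).deriv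

lemma dx_neg (hf : ContDiff ℝ (⊤ : ℕ∞) f) :
    dx (fun q => -f q) = fun q => -dx f q :=
  funext fun p => ((hderiv_x hf p).neg).deriv

lemma dx_const_mul (c : ℝ) (hf : ContDiff ℝ (⊤ : ℕ∞) f) :
    dx (fun q => c * f q) = fun q => c * dx f q :=
  funext fun p => ((hderiv_x hf p).const_mul c).deriv

lemma dx_sq (hf : ContDiff ℝ (⊤ : ℕ∞) f) :
    dx (fun q => f q ^ 2) = fun q => 2 * f q * dx f q := by
  have h : (fun q : ℝ × ℝ => f q ^ 2) = fun q => f q * f q := by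
    funext q; ring
  rw [h, dx_mul hf hf]; funext q; ring

lemma dt_add (hf : ContDiff ℝ (⊤ : ℕ∞) f) (hg : ContDiff ℝ (⊤ : ℕ∞) g) :
    dt (fun q => f q + g q) = fun q => dt f q + dt g q :=
  funext fun p => ((hderiv_t hf p).add (hderiv_t hg p)).deriv

lemma dt_mul (hf : ContDiff ℝ (⊤ : ℕ∞) f) (hg : ContDiff ℝ (⊤ : ℕ∞) g) :
    dt (fun q => f q * g q) = fun q => dt f q * g q + f q * dt g q :=
  funext fun p => ((hderiv_t hf p).mul (hderiv_t hg p)).deriv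

lemma dt_neg (hf : ContDiff ℝ (⊤ : ℕ∞) f) :
    dt (fun q => -f q) = fun q => -dt f q :=
  funext fun p => ((hderiv_t hf p).neg).deriv

lemma dt_const_mul (c : ℝ) (hf : ContDiff ℝ (⊤ : ℕ∞) f) :
    dt (fun q => c * f q) = fun q => c * dt f q :=
  funext fun p => ((hderiv_t hf p).const_mul c).deriv

lemma dt_sq (hf : ContDiff ℝ (⊤ : ℕ∞) f) :
    dt (fun q => f q ^ 2) = fun q => 2 * f q * dt f q := by
  have h : (fun q : ℝ × ℝ => f q ^ 2) = fun q => f q * f q := by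
    funext q; ring
  rw [h, dt_mul hf hf]; funext q; ring

lemma dt_dx (hf : ContDiff ℝ (⊤ : ℕ∞) f) : dt (dx f) = dx (dt f) := by
  have hdf : Differentiable ℝ (fderiv ℝ f) :=
    (hf.fderiv_right (m := (⊤ : ℕ∞)) (by simp)).differentiable (by simp)
  have hsym : ∀ p : ℝ × ℝ, ∀ v w : ℝ × ℝ,
      fderiv ℝ (fderiv ℝ f) p v w = fderiv ℝ (fderiv ℝ f) p w v := by
    intro p v w
    exact second_derivative_symmetric
      (fun y => ((hf.differentiable (by simp)) y).hasFDerivAt)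
      (hdf p).hasFDerivAt v w
  funext p
  rw [dt_eq (contDiff_dx hf), dx_eq (contDiff_dt hf), dx_eq hf, dt_eq hf]
  have h1 : fderiv ℝ (fun q => fderiv ℝ f q ((0:ℝ),(1:ℝ))) p
      = (fderiv ℝ f p).comp (fderiv ℝ (fun _ : ℝ × ℝ => ((0:ℝ),(1:ℝ))) p)
        + (fderiv ℝ (fderiv ℝ f) p).flip ((0:ℝ),(1:ℝ)) :=
    fderiv_clm_apply (hdf p) (differentiableAt_const _)
  have h2 : fderiv ℝ (fun q => fderiv ℝ f q ((1:ℝ),(0:ℝ))) p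
      = (fderiv ℝ f p).comp (fderiv ℝ (fun _ : ℝ × ℝ => ((1:ℝ),(0:ℝ))) p)
        + (fderiv ℝ (fderiv ℝ f) p).flip ((1:ℝ),(0:ℝ)) :=
    fderiv_clm_apply (hdf p) (differentiableAt_const _)
  simp only [h1, h2, fderiv_const, fderiv_const_apply, Pi.zero_apply, ContinuousLinearMap.comp_zero,
    ContinuousLinearMap.zero_comp, zero_add, ContinuousLinearMap.add_apply,
    ContinuousLinearMap.zero_apply, ContinuousLinearMap.flip_apply]
  exact hsym p _ _

lemma dx_const (c : ℝ) : dx (fun _ : ℝ × ℝ => c) = fun _ => 0 :=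
  funext fun p => (hasDerivAt_const p.2 c).deriv

lemma dt_const (c : ℝ) : dt (fun _ : ℝ × ℝ => c) = fun _ => 0 :=
  funext fun p => (hasDerivAt_const p.1 c).deriv

end KdVAux

open KdVAux

set_option maxHeartbeats 4000000 in
/-- The first higher symmetry of the KdV hierarchy: if `u` solves
`u_t + u u_x + u_{xxx} = 0`, then
`P = u_{xxxxx} + (5/3)u u_{xxx} + (10/3)u_x u_{xx} + (5/6)u² u_x`
solves the linearized KdV equation `P_t + (uP)_x + P_{xxx} = 0`. -/
theorem kdv_fifth_order_symmetry
    (u : ℝ × ℝ → ℝ) (hu : ContDiff ℝ (⊤ : ℕ∞) u)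
    (hpde : ∀ z : ℝ × ℝ, dt u z + u z * dx u z + dx (dx (dx u)) z = 0) :
    ∀ z : ℝ × ℝ,
      dt (fun q => dx (dx (dx (dx (dx u)))) q + (5/3) * u q * dx (dx (dx u)) q
          + (10/3) * dx u q * dx (dx u) q + (5/6) * u q ^ 2 * dx u q) z
        + dx (fun q => u q * (dx (dx (dx (dx (dx u)))) q
            + (5/3) * u q * dx (dx (dx u)) q
            + (10/3) * dx u q * dx (dx u) q + (5/6) * u q ^ 2 * dx u q)) z
        + dx (dx (dx (fun q => dx (dx (dx (dx (dx u)))) q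
            + (5/3) * u q * dx (dx (dx u)) q
            + (10/3) * dx u q * dx (dx u) q + (5/6) * u q ^ 2 * dx u q))) z = 0 := by
  have h0 : dt u = fun q => -(u q * dx u q + dx (dx (dx u)) q) := by
    funext q
    have := hpde q
    linarith
  intro z
  simp (disch := fun_prop) only [dt_add, dt_mul, dt_const_mul, dt_sq, dt_neg, dt_dx,
    dx_add, dx_mul, dx_const_mul, dx_sq, dx_neg, dx_const, dt_const, h0, mul_zero, zero_mul, add_zero, zero_add]
  ring
end
end
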